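/- arXiv:1802.01977 — 5 statements merged into one kernel-verified Lean document; each statement's English description precedes it below -/
import Mathlib

section
/- Let q be a prime power and n ≥ q a positive integer. Then the probability P_{n,q} that a uniformly random monic polynomial of degree n over F_q has no root in F_q equals (1 − 1/q)^q. -/
/-!
Division with remainder by `D = X ^ q - X` splits a monic `f` of degree `n ≥ q` into a monic
quotient of degree `n - q` and a remainder of degree `< q`. Since `D` vanishes on all of `F`,
the remainder has the same values as `f`, and by Lagrange interpolation the polynomials of
degree `< q` correspond bijectively to the functions `F → F`. So `f` has no root exactly when these `q` values are nonzero, which leaves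
`q ^ (n - q) * (q - 1) ^ q` of the `q ^ n` monic polynomials of degree `n`.
-/

open Polynomial

namespace Polynomial

section DivModByMonic

variable {R : Type*} [CommRing R] [Nontrivial R]

noncomputable def monicDivModByMonicEquiv {D : R[X]} (hD : D.Monic) {d n : ℕ}
    (hDd : D.natDegree = d) (hdn : d ≤ n) :
    {f : R[X] // f.Monic ∧ f.natDegree = n} ≃
      {g : R[X] // g.Monic ∧ g.natDegree = n - d} × degreeLT R d where
  toFun f :=
    have hdeg : D.degree ≤ f.1.degree := by
      rw [(degree_eq_iff_natDegree_eq hD.ne_zero).2 hDd,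
        (degree_eq_iff_natDegree_eq f.2.1.ne_zero).2 f.2.2]
      exact_mod_cast hdn
    (⟨f.1 /ₘ D, by rw [Monic, leadingCoeff_divByMonic_of_monic hD hdeg, f.2.1.leadingCoeff],
        by rw [natDegree_divByMonic _ hD, f.2.2, hDd]⟩,
      ⟨f.1 %ₘ D, mem_degreeLT.2 <|
        (degree_eq_iff_natDegree_eq hD.ne_zero).2 hDd ▸ degree_modByMonic_lt _ hD⟩)
  invFun p :=
    have hgD : (p.1.1 * D).natDegree = n := by
      rw [p.1.2.1.natDegree_mul hD, p.1.2.2, hDd, Nat.sub_add_cancel hdn]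
    have hr : p.2.1.degree < (p.1.1 * D).degree := by
      rw [(degree_eq_iff_natDegree_eq (p.1.2.1.mul hD).ne_zero).2 hgD]
      exact (mem_degreeLT.1 p.2.2).trans_le (by exact_mod_cast hdn)
    ⟨p.1.1 * D + p.2.1, (p.1.2.1.mul hD).add_of_left hr,
      by rw [natDegree_add_eq_left_of_degree_lt hr, hgD]⟩
  left_inv f := Subtype.ext <| by
    simp only
    rw [mul_comm, add_comm, modByMonic_add_div]
  right_inv p := by
    obtain ⟨hq, hr⟩ := div_modByMonic_unique (f := p.1.1 * D + p.2.1) p.1.1 p.2.1 hD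
      ⟨by ring, (degree_eq_iff_natDegree_eq hD.ne_zero).2 hDd ▸ mem_degreeLT.1 p.2.2⟩
    exact Prod.ext (Subtype.ext hq) (Subtype.ext hr)

theorem monicDivModByMonicEquiv_snd {D : R[X]} (hD : D.Monic) {d n : ℕ}
    (hDd : D.natDegree = d) (hdn : d ≤ n) (f : {f : R[X] // f.Monic ∧ f.natDegree = n}) :
    ((monicDivModByMonicEquiv hD hDd hdn f).2 : R[X]) = f.1 %ₘ D :=
  rfl

end DivModByMonic

theorem card_monic_natDegree_eq (R : Type*) [Semiring R] [Nontrivial R] [Fintype R] (m : ℕ) :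
    Nat.card {g : R[X] // g.Monic ∧ g.natDegree = m} = Fintype.card R ^ m := by
  rw [Nat.card_congr ((monicEquivDegreeLT m).trans (degreeLTEquiv R m).toEquiv)]
  simp [Nat.card_eq_fintype_card]

end Polynomial

namespace FiniteField

variable (F : Type*) [Field F] [Fintype F]

theorem monic_X_pow_card_sub_X : (X ^ Fintype.card F - X : F[X]).Monic :=
  monic_X_pow_sub <| by rw [degree_X]; exact_mod_cast Fintype.one_lt_card

theorem eval_X_pow_card_sub_X (α : F) : (X ^ Fintype.card F - X : F[X]).eval α = 0 := by
  simp [FiniteField.pow_card]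

section Interpolation

variable [DecidableEq F]

noncomputable def evalDegreeLTEquiv : degreeLT F (Fintype.card F) ≃ (F → F) :=
  (Lagrange.funEquivDegreeLT (s := Finset.univ) (v := id)
      Function.injective_id.injOn).toEquiv.trans
    (Equiv.arrowCongr (Equiv.subtypeUnivEquiv Finset.mem_univ) (Equiv.refl F))

theorem evalDegreeLTEquiv_apply (r : degreeLT F (Fintype.card F)) (α : F) :
    evalDegreeLTEquiv F r α = r.1.eval α :=
  rfl

/-- A monic polynomial of degree `n ≥ q` as its quotient by `X ^ q - X` and its values. -/
noncomputable def monicEquivMonicProdFun {n : ℕ} (hn : Fintype.card F ≤ n) :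
    {f : F[X] // f.Monic ∧ f.natDegree = n} ≃
      {g : F[X] // g.Monic ∧ g.natDegree = n - Fintype.card F} × (F → F) :=
  (monicDivModByMonicEquiv (monic_X_pow_card_sub_X F)
      (X_pow_card_sub_X_natDegree_eq F Fintype.one_lt_card) hn).trans
    ((Equiv.refl _).prodCongr (evalDegreeLTEquiv F))

theorem monicEquivMonicProdFun_snd {n : ℕ} (hn : Fintype.card F ≤ n)
    (f : {f : F[X] // f.Monic ∧ f.natDegree = n}) :
    (monicEquivMonicProdFun F hn f).2 = fun α => f.1.eval α :=
  _root_.funext fun α => by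
    simp only [monicEquivMonicProdFun, Equiv.trans_apply, Equiv.prodCongr_apply, Prod.map_snd,
      evalDegreeLTEquiv_apply, monicDivModByMonicEquiv_snd]
    exact eval₂_modByMonic_eq_self_of_root (eval_X_pow_card_sub_X F α)

end Interpolation

theorem card_forall_ne_zero_fun :
    Nat.card {v : F → F // ∀ α, v α ≠ 0} = (Fintype.card F - 1) ^ Fintype.card F := by
  classical
  rw [Nat.card_congr (Equiv.subtypePiEquivPi.trans
      (Equiv.piCongrRight fun _ => (unitsEquivNeZero (G₀ := F)).symm)),
    Nat.card_fun, Nat.card_eq_fintype_card (α := Fˣ), Fintype.card_units,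
    Nat.card_eq_fintype_card]

theorem card_monic_natDegree_eq_forall_eval_ne_zero {n : ℕ} (hn : Fintype.card F ≤ n) :
    Nat.card {f : F[X] // f.Monic ∧ f.natDegree = n ∧ ∀ α : F, f.eval α ≠ 0} =
      Fintype.card F ^ (n - Fintype.card F) * (Fintype.card F - 1) ^ Fintype.card F := by
  classical
  have hE : {f : F[X] // f.Monic ∧ f.natDegree = n ∧ ∀ α : F, f.eval α ≠ 0} ≃
      {g : F[X] // g.Monic ∧ g.natDegree = n - Fintype.card F} ×
        {v : F → F // ∀ α, v α ≠ 0} :=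
    (Equiv.subtypeEquivRight fun _ => and_assoc.symm).trans <|
      (Equiv.subtypeSubtypeEquivSubtypeInter _ fun f : F[X] => ∀ α, f.eval α ≠ 0).symm.trans <|
        ((monicEquivMonicProdFun F hn).subtypeEquiv fun f => by
            simp only [monicEquivMonicProdFun_snd, true_and]).trans <|
          (Equiv.subtypeProdEquivProd (p := fun _ => True)).trans <|
            (Equiv.subtypeUnivEquiv fun _ => trivial).prodCongr (Equiv.refl _)
  rw [Nat.card_congr hE, Nat.card_prod, card_monic_natDegree_eq, card_forall_ne_zero_fun]

end FiniteField

/-- Let `F` be a finite field with `q` elements and `n ≥ q` a positive integer.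
The probability that a uniformly random monic polynomial of degree `n` over `F`
has no root in `F` equals `(1 - 1/q) ^ q`. -/
theorem prob_no_root_eq (F : Type*) [Field F] [Fintype F]
    (n : ℕ) (hn : Fintype.card F ≤ n) :
    (Nat.card {f : Polynomial F //
        f.Monic ∧ f.natDegree = n ∧ ∀ α : F, f.eval α ≠ 0} : ℝ) /
      (Fintype.card F : ℝ) ^ n =
      (1 - 1 / (Fintype.card F : ℝ)) ^ (Fintype.card F) := by
  set q := Fintype.card F
  have hq : (q : ℝ) ≠ 0 := Nat.cast_ne_zero.2 Fintype.card_ne_zero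
  rw [FiniteField.card_monic_natDegree_eq_forall_eval_ne_zero F hn, Nat.cast_mul, Nat.cast_pow,
    Nat.cast_pow, Nat.cast_sub Fintype.card_pos, Nat.cast_one, one_sub_div hq, div_pow,
    ← Nat.sub_add_cancel hn, pow_add, Nat.add_sub_cancel,
    mul_div_mul_left _ _ (pow_ne_zero _ hq)]
end

section
/- There exists an absolute constant C > 0 such that for every positive integer n and every prime power q, |P_n − P_{n,q}| ≤ C/q, where P_n is the probability that a uniformly random permutation in S_n has no fixed points and P_{n,q} is the probability that a uniformly random monic polynomial of degree n over F_q has no root in F_q. -/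
/-- The probability that a uniformly random permutation of `{1,...,n}`
(modeled as `Fin n`) has no fixed points. -/
noncomputable def derangementProb (n : ℕ) : ℝ :=
  ((Finset.univ.filter fun σ : Equiv.Perm (Fin n) => ∀ k, σ k ≠ k).card : ℝ) /
    (Fintype.card (Equiv.Perm (Fin n)) : ℝ)

/-- The probability that a uniformly random monic polynomial of degree `n`
over the finite field `F` has no root in `F`. -/
noncomputable def noRootProb (F : Type*) [Field F] [Fintype F] (n : ℕ) : ℝ :=
  (Nat.card {f : Polynomial F //
      f.Monic ∧ f.natDegree = n ∧ ∀ α : F, f.eval α ≠ 0} : ℝ) /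
    (Fintype.card F : ℝ) ^ n

/-!
The monic polynomials of degree `n` vanishing on a `k`-set `S ⊆ F` are the products
`∏_{a ∈ S} (X - a) * g` with `g` monic of degree `n - k`, so there are `q ^ (n - k)` of them when
`k ≤ n`. Inclusion–exclusion over the set of roots then gives
`P_{n,q} = ∑_{k ≤ n} (-1)^k (q choose k) / q^k`, to be compared termwise with
`P_n = ∑_{k ≤ n} (-1)^k / k!`. Since `(q choose k) / q^k = q(q-1)⋯(q-k+1) / (k! q^k)`, the `k`-th
terms differ by at most `(k choose 2) / (k! q)`, and `∑ (k choose 2) / k! = e / 2`.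
-/

open Polynomial Finset
open scoped Nat

theorem Nat.card_and_forall_not_eq_alternating_sum {α ι : Type*} [Fintype ι] {Q : α → Prop}
    [Finite {x // Q x}] (P : ι → α → Prop) :
    (Nat.card {x // Q x ∧ ∀ i, ¬ P i x} : ℤ) =
      ∑ t : Finset ι, (-1 : ℤ) ^ #t * Nat.card {x // Q x ∧ ∀ i ∈ t, P i x} := by
  classical
  have := Fintype.ofFinite {x // Q x}
  have h := inclusion_exclusion_card_inf_compl univ fun i => univ.filter fun x : {x // Q x} => P i x
  simp only [← Nat.card_congr (Equiv.subtypeSubtypeEquivSubtypeInter Q _), Nat.card_eq_fintype_card,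
    Fintype.card_subtype]
  convert h using 3
  · ext x; simp [Finset.mem_inf]
  · exact powerset_univ.symm
  · congr 2; ext x; simp [Finset.mem_inf]

namespace Polynomial

variable {R : Type*} [CommRing R]

theorem card_monic_natDegree_eq_s6 [Fintype R] [Nontrivial R] (n : ℕ) :
    Nat.card {p : R[X] // p.Monic ∧ p.natDegree = n} = Fintype.card R ^ n := by
  rw [Nat.card_congr ((monicEquivDegreeLT n).trans (degreeLTEquiv R n).toEquiv)]
  simp

instance [Fintype R] [Nontrivial R] (n : ℕ) : Finite {p : R[X] // p.Monic ∧ p.natDegree = n} :=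
  Nat.finite_of_card_ne_zero (by rw [card_monic_natDegree_eq_s6]; positivity)

theorem card_monic_natDegree_eq_dvd {g : R[X]} (hg : g.Monic) {n : ℕ} (hgn : g.natDegree ≤ n) :
    Nat.card {p : R[X] // p.Monic ∧ p.natDegree = n ∧ g ∣ p} =
      Nat.card {p : R[X] // p.Monic ∧ p.natDegree = n - g.natDegree} := by
  nontriviality R
  refine (Nat.card_eq_of_bijective
    (fun h => ⟨g * h.1, hg.mul h.2.1, by rw [hg.natDegree_mul h.2.1, h.2.2]; omega,
      dvd_mul_right g h.1⟩) ⟨?_, ?_⟩).symm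
  · exact fun h₁ h₂ hh => Subtype.ext (hg.isRegular.left (congrArg Subtype.val hh))
  · rintro ⟨_, hp, hpn, h, rfl⟩
    have hh : h.Monic := hg.of_mul_monic_left hp
    exact ⟨⟨h, hh, by rw [hg.natDegree_mul hh] at hpn; omega⟩, rfl⟩

theorem prod_X_sub_C_dvd_iff_forall_eval_eq_zero [IsDomain R] (s : Finset R) (p : R[X]) :
    (∏ a ∈ s, (X - C a)) ∣ p ↔ ∀ a ∈ s, p.eval a = 0 := by
  rcases eq_or_ne p 0 with rfl | hp
  · simp
  rw [Finset.prod_eq_multiset_prod, Multiset.prod_X_sub_C_dvd_iff_le_roots hp,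
    Multiset.le_iff_subset s.nodup]
  simp [Multiset.subset_iff, mem_roots hp]

theorem card_monic_natDegree_eq_forall_eval_eq_zero [IsDomain R] [Fintype R] (S : Finset R)
    (n : ℕ) :
    Nat.card {p : R[X] // p.Monic ∧ p.natDegree = n ∧ ∀ a ∈ S, p.eval a = 0} =
      if #S ≤ n then Fintype.card R ^ (n - #S) else 0 := by
  simp_rw [← prod_X_sub_C_dvd_iff_forall_eval_eq_zero]
  have hg : (∏ a ∈ S, (X - C a)).Monic := monic_prod_X_sub_C _ S
  have hdeg : (∏ a ∈ S, (X - C a)).natDegree = #S := natDegree_finsetProd_X_sub_C_eq_card S _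
  split_ifs with hS
  · rw [card_monic_natDegree_eq_dvd hg (hdeg ▸ hS), hdeg, card_monic_natDegree_eq_s6]
  · rw [Nat.card_eq_zero]
    refine .inl ⟨fun ⟨p, hp, hpn, hdvd⟩ => hS ?_⟩
    rw [← hdeg, ← hpn]
    exact natDegree_le_of_dvd hdvd hp.ne_zero

theorem card_monic_natDegree_eq_forall_eval_ne_zero [IsDomain R] [Fintype R] (n : ℕ) :
    (Nat.card {p : R[X] // p.Monic ∧ p.natDegree = n ∧ ∀ a : R, p.eval a ≠ 0} : ℤ) =
      ∑ k ∈ range (n + 1), (-1 : ℤ) ^ k * (Fintype.card R).choose k * Fintype.card R ^ (n - k) := by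
  have h := Nat.card_and_forall_not_eq_alternating_sum
    (Q := fun p : R[X] => p.Monic ∧ p.natDegree = n) fun a p => p.eval a = 0
  simp only [and_assoc, card_monic_natDegree_eq_forall_eval_eq_zero] at h
  set q := Fintype.card R
  let g (k : ℕ) : ℤ := (-1) ^ k * q.choose k * ((if k ≤ n then q ^ (n - k) else 0 : ℕ) : ℤ)
  have hg : ∀ k ≥ min q n + 1, g k = 0 := fun k hk => by
    rcases le_or_gt k q with hkq | hkq
    · simp [g, if_neg (show ¬ k ≤ n by omega)]
    · simp [g, Nat.choose_eq_zero_of_lt hkq]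
  calc _ = ∑ k ∈ range (q + 1), g k := by
        rw [h, ← powerset_univ, sum_powerset_apply_card
          (fun k => (-1 : ℤ) ^ k * ((if k ≤ n then q ^ (n - k) else 0 : ℕ) : ℤ)), card_univ]
        simp only [nsmul_eq_mul, g]
        exact sum_congr rfl fun k _ => by ring
    _ = ∑ k ∈ range (n + 1), g k := by
        rw [eventually_constant_sum hg (n := q + 1) (by omega),
          eventually_constant_sum hg (n := n + 1) (by omega)]
    _ = _ := sum_congr rfl fun k hk => by
        simp [g, if_pos (Nat.lt_succ_iff.mp (mem_range.mp hk))]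

end Polynomial

/-- `q^k - q(q-1)⋯(q-k+1) ≤ (k choose 2) q^(k-1)`, multiplied by `q` to avoid `k - 1`. -/
theorem Nat.pow_succ_le_mul_descFactorial_add (q k : ℕ) :
    q ^ (k + 1) ≤ q * q.descFactorial k + k.choose 2 * q ^ k := by
  induction k with
  | zero => simp
  | succ k ih =>
    have hdesc : q * q.descFactorial k ≤ q.descFactorial (k + 1) + k * q ^ k := by
      rw [Nat.descFactorial_succ]
      calc q * q.descFactorial k ≤ (q - k + k) * q.descFactorial k := by gcongr; omega
        _ = (q - k) * q.descFactorial k + k * q.descFactorial k := add_mul _ _ _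
        _ ≤ (q - k) * q.descFactorial k + k * q ^ k := by gcongr; exact q.descFactorial_le_pow k
    rw [Nat.choose_succ_succ', Nat.choose_one_right]
    calc q ^ (k + 1 + 1) = q * q ^ (k + 1) := by ring
      _ ≤ q * (q * q.descFactorial k + k.choose 2 * q ^ k) := by gcongr
      _ = q * (q * q.descFactorial k) + k.choose 2 * q ^ (k + 1) := by ring
      _ ≤ q * (q.descFactorial (k + 1) + k * q ^ k) + k.choose 2 * q ^ (k + 1) := by gcongr
      _ = q * q.descFactorial (k + 1) + (k + k.choose 2) * q ^ (k + 1) := by ring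

theorem abs_inv_factorial_sub_choose_div_pow_le {q : ℕ} (hq : 0 < q) (k : ℕ) :
    |(k ! : ℝ)⁻¹ - q.choose k / q ^ k| ≤ k.choose 2 / k ! / q := by
  have hqR : (0 : ℝ) < q := by exact_mod_cast hq
  have hk : (0 : ℝ) < k ! := by exact_mod_cast k.factorial_pos
  have hchoose : (q.choose k : ℝ) / q ^ k = q.descFactorial k / (k ! * q ^ k) := by
    rw [Nat.descFactorial_eq_factorial_mul_choose]
    push_cast
    field_simp
  have hpow : (q.descFactorial k : ℝ) ≤ q ^ k := by exact_mod_cast q.descFactorial_le_pow k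
  have hgap : (q : ℝ) ^ (k + 1) ≤ q * q.descFactorial k + k.choose 2 * q ^ k := by
    exact_mod_cast Nat.pow_succ_le_mul_descFactorial_add q k
  have hdiff : (k ! : ℝ)⁻¹ - q.choose k / q ^ k = (q ^ k - q.descFactorial k) / q ^ k / k ! := by
    rw [hchoose]
    field_simp
  rw [hdiff, abs_of_nonneg (div_nonneg (div_nonneg (sub_nonneg.2 hpow) (by positivity)) hk.le)]
  rw [div_right_comm _ (k ! : ℝ)]
  gcongr ?_ / _
  rw [div_le_div_iff₀ (by positivity) hqR]
  rw [pow_succ] at hgap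
  linarith

theorem sum_choose_two_div_factorial_le (m : ℕ) :
    ∑ k ∈ range m, (k.choose 2 : ℝ) / k ! ≤ Real.exp 1 / 2 := by
  calc ∑ k ∈ range m, (k.choose 2 : ℝ) / k !
      ≤ ∑ k ∈ range (m + 2), (k.choose 2 : ℝ) / k ! :=
        sum_le_sum_of_subset_of_nonneg (range_subset_range.2 (by omega)) fun _ _ _ => by positivity
    _ = ∑ k ∈ range m, ((k + 2).choose 2 : ℝ) / (k + 2)! := by simp [sum_range_succ']
    _ = (∑ k ∈ range m, (1 : ℝ) ^ k / k !) / 2 := by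
        rw [sum_div]
        refine sum_congr rfl fun k _ => ?_
        have h := Nat.choose_mul_factorial_mul_factorial (show 2 ≤ k + 2 by omega)
        rw [Nat.add_sub_cancel] at h
        have hc : ((k + 2).choose 2 : ℝ) ≠ 0 := by exact_mod_cast (Nat.choose_pos (by omega)).ne'
        rw [← h]
        push_cast
        field_simp
        norm_num [Nat.factorial]
    _ ≤ Real.exp 1 / 2 := by gcongr; exact Real.sum_le_exp_of_nonneg zero_le_one m

theorem derangementProb_eq_sum (n : ℕ) :
    derangementProb n = ∑ k ∈ range (n + 1), (-1 : ℝ) ^ k * (k ! : ℝ)⁻¹ := by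
  have hcard : #(univ.filter fun σ : Equiv.Perm (Fin n) => ∀ k, σ k ≠ k) = numDerangements n := by
    rw [← card_derangements_fin_eq_numDerangements, ← Fintype.card_subtype]
    exact Fintype.card_congr (Equiv.refl _)
  rw [derangementProb, hcard, Fintype.card_perm, Fintype.card_fin, ← Int.cast_natCast,
    numDerangements_sum]
  push_cast
  rw [sum_div]
  refine sum_congr rfl fun k hk => ?_
  have hkn : k ≤ n := Nat.lt_succ_iff.mp (mem_range.mp hk)
  rw [Nat.ascFactorial_eq_div, add_tsub_cancel_of_le hkn]
  push_cast [Nat.factorial_dvd_factorial hkn]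
  field_simp

theorem noRootProb_eq_sum (F : Type*) [Field F] [Fintype F] (n : ℕ) :
    noRootProb F n = ∑ k ∈ range (n + 1),
      (-1 : ℝ) ^ k * ((Fintype.card F).choose k / (Fintype.card F : ℝ) ^ k) := by
  rw [noRootProb, ← Int.cast_natCast, card_monic_natDegree_eq_forall_eval_ne_zero]
  push_cast
  rw [sum_div]
  refine sum_congr rfl fun k hk => ?_
  rw [← pow_sub_mul_pow _ (Nat.lt_succ_iff.mp (mem_range.mp hk))]
  field_simp

/-- There is an absolute constant `C > 0` such that for every positive integer
`n` and every finite field `F` with `q` elements, `|P_n - P_{n,q}| ≤ C/q`. -/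
theorem derangement_poly_prob_close : ∃ C : ℝ, 0 < C ∧
    ∀ (n : ℕ), 0 < n → ∀ (F : Type) [Field F] [Fintype F],
    |derangementProb n - noRootProb F n| ≤ C / (Fintype.card F : ℝ) := by
  refine ⟨Real.exp 1 / 2, by positivity, fun n _ F _ _ => ?_⟩
  set q := Fintype.card F
  rw [derangementProb_eq_sum, noRootProb_eq_sum, ← sum_sub_distrib]
  calc |∑ k ∈ range (n + 1), ((-1 : ℝ) ^ k * (k ! : ℝ)⁻¹ - (-1) ^ k * (q.choose k / (q : ℝ) ^ k))|
      ≤ ∑ k ∈ range (n + 1), |(k ! : ℝ)⁻¹ - q.choose k / (q : ℝ) ^ k| := by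
        refine (abs_sum_le_sum_abs _ _).trans_eq (sum_congr rfl fun k _ => ?_)
        rw [← mul_sub, abs_mul, abs_neg_one_pow, one_mul]
    _ ≤ ∑ k ∈ range (n + 1), (k.choose 2 : ℝ) / k ! / q :=
        sum_le_sum fun k _ => abs_inv_factorial_sub_choose_div_pow_le Fintype.card_pos k
    _ ≤ Real.exp 1 / 2 / q := by
        rw [← sum_div]
        gcongr
        exact sum_choose_two_div_factorial_le (n + 1)
end

section
/- Let n be a positive integer, j ∈ {1,...,n}, and a a nonnegative integer with j·a ≤ n. Then the probability that a uniformly random permutation σ ∈ S_n has exactly a cycles of length j is at most 1/(j^a · a!). Equivalently, ∑ over tuples b ∈ Ω(n) with b_j = a of ∏_{k=1}^{n} 1/(k^{b_k} b_k!) is at most 1/(j^a a!). -/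
/-!
Record a permutation `σ` of `α` by the set `S` of its points of minimal period `j`, its
restriction to `S` and its restriction to the complement of `S`; this is injective. When
`#S = j * a`, the restriction to `S` has cycle type `j^a`, and by Cauchy's formula there are
exactly `(j a)! / (j^a a!)` such permutations of `S`. Summing over the `choose n (j a)` sets `S`
and the `(n - j a)!` permutations of the complement bounds the count by `n! / (j^a a!)`.
-/

open Finset Function
open scoped Nat

theorem Multiset.prod_factorial_count_replicate (a j : ℕ) :
    ∏ n ∈ (replicate a j).toFinset, (count n (replicate a j))! = a ! := by
  rcases Nat.eq_zero_or_pos a with rfl | ha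
  · simp
  · simp [ha.ne']

namespace Equiv.Perm

variable {α : Type*}

theorem minimalPeriod_subtypePerm {p : α → Prop} (σ : Perm α) (h : ∀ x, p (σ x) ↔ p x)
    (x : {x // p x}) : minimalPeriod (σ.subtypePerm h) x = minimalPeriod σ x :=
  minimalPeriod_eq_minimalPeriod_iff.2 fun n => by
    simp only [IsPeriodicPt, IsFixedPt, iterate_eq_pow, subtypePerm_pow, Subtype.ext_iff,
      subtypePerm_apply]

variable [Fintype α]

noncomputable def ptsOfMinimalPeriod (σ : Perm α) (j : ℕ) : Finset α :=
  {x | minimalPeriod σ x = j}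

variable [DecidableEq α]

theorem card_support_cycleOf_eq_minimalPeriod {σ : Perm α} {x : α} (hx : σ x ≠ x) :
    #(σ.cycleOf x).support = minimalPeriod σ x := by
  have hmem : x ∈ (σ.cycleOf x).support :=
    mem_support_cycleOf_iff.2 ⟨SameCycle.refl σ x, mem_support.2 hx⟩
  have hcyc := σ.isCycleOn_support_cycleOf x
  refine Nat.dvd_antisymm ?_ ?_
  · rw [← hcyc.pow_apply_eq hmem, ← iterate_eq_pow]
    exact isPeriodicPt_minimalPeriod σ x
  · rw [← isPeriodicPt_iff_minimalPeriod_dvd, IsPeriodicPt, IsFixedPt, iterate_eq_pow,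
      hcyc.pow_apply_eq hmem]

theorem cycleType_eq_replicate_of_forall_minimalPeriod_eq {σ : Perm α} {j : ℕ} (hj : 2 ≤ j)
    (h : ∀ x, minimalPeriod σ x = j) :
    σ.cycleType = Multiset.replicate (Fintype.card α / j) j := by
  have hmem : ∀ b ∈ σ.cycleType, b = j := by
    intro b hb
    rw [cycleType_def, Multiset.mem_map] at hb
    obtain ⟨c, hc, rfl⟩ := hb
    obtain ⟨x, hx⟩ := (mem_cycleFactorsFinset_iff.1 hc).1.nonempty_support
    have hσx : σ x ≠ x := mem_support.1 (mem_cycleFactorsFinset_support_le hc hx)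
    rw [comp_apply, cycle_is_cycleOf hx hc, card_support_cycleOf_eq_minimalPeriod hσx, h]
  have hsupport : σ.support = univ := by
    refine eq_univ_of_forall fun x => mem_support.2 fun hx => ?_
    have hfix : minimalPeriod σ x = 1 := minimalPeriod_eq_one_iff_isFixedPt.2 hx
    have := h x
    omega
  have hrep := Multiset.eq_replicate_card.2 hmem
  have hsum : Multiset.card σ.cycleType * j = Fintype.card α := by
    rw [← card_univ, ← hsupport, ← sum_cycleType, hrep, Multiset.sum_replicate, smul_eq_mul,
      Multiset.card_replicate]
  rw [hrep, ← hsum, Nat.mul_div_cancel _ (by omega)]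

theorem card_filter_forall_minimalPeriod_eq_mul_le {j a : ℕ} (hj : 0 < j)
    (hα : Fintype.card α = j * a) :
    #{σ : Perm α | ∀ x, minimalPeriod σ x = j} * (j ^ a * a !) ≤ (j * a)! := by
  -- `cycleType` does not record fixed points, so `j = 1` is treated apart
  obtain rfl | hj2 : j = 1 ∨ 2 ≤ j := by omega
  · have hone : ({σ : Perm α | ∀ x, minimalPeriod σ x = 1} : Finset (Perm α)) = {1} := by
      ext σ
      simp [minimalPeriod_eq_one_iff_isFixedPt, IsFixedPt, Equiv.ext_iff]
    rw [hone]
    simp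
  · have hsub : ({σ : Perm α | ∀ x, minimalPeriod σ x = j} : Finset (Perm α)) ⊆
        ({σ : Perm α | σ.cycleType = Multiset.replicate a j} : Finset (Perm α)) := by
      intro σ hσ
      rw [mem_filter] at hσ ⊢
      exact ⟨hσ.1, by rw [cycleType_eq_replicate_of_forall_minimalPeriod_eq hj2 hσ.2, hα,
        Nat.mul_div_cancel_left _ hj]⟩
    have hcount := card_of_cycleType_mul_eq (α := α) (Multiset.replicate a j)
    rw [if_pos ⟨by simp [hα, mul_comm], fun b hb => (Multiset.eq_of_mem_replicate hb) ▸ hj2⟩,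
      Multiset.sum_replicate, Multiset.prod_replicate, Multiset.prod_factorial_count_replicate,
      hα, smul_eq_mul, mul_comm a j, Nat.sub_self, Nat.factorial_zero, one_mul] at hcount
    exact hcount ▸ Nat.mul_le_mul_right _ (card_le_card hsub)

theorem card_filter_ptsOfMinimalPeriod_eq_le (j : ℕ) (S : Finset α) :
    #{σ : Perm α | σ.ptsOfMinimalPeriod j = S} ≤
      #{π : Perm S | ∀ x, minimalPeriod π x = j} * (Fintype.card α - #S)! := by
  have hsub : ({σ : Perm α | σ.ptsOfMinimalPeriod j = S} : Finset (Perm α)) ⊆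
      (({π : Perm S | ∀ x, minimalPeriod π x = j} : Finset (Perm S)) ×ˢ univ).image
        fun p : Perm S × Perm {x // x ∉ S} => p.1.subtypeCongr p.2 := by
    intro σ hσ
    rw [mem_filter] at hσ
    have hS : ∀ x, minimalPeriod σ x = j ↔ x ∈ S := fun x => by
      simp [← hσ.2, ptsOfMinimalPeriod]
    have hinv : ∀ x, σ x ∈ S ↔ x ∈ S := fun x => by
      rw [← hS, ← hS, minimalPeriod_apply (σ.injective.mem_periodicPts x)]
    refine mem_image.2 ⟨(σ.subtypePerm hinv,
      σ.subtypePerm (p := (· ∉ S)) fun x => not_congr (hinv x)), ?_, ?_⟩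
    · simp [minimalPeriod_subtypePerm, hS]
    · ext x
      by_cases hx : x ∈ S
      · simp [subtypeCongr.left_apply _ _ hx]
      · simp [subtypeCongr.right_apply _ _ hx]
  refine (card_le_card hsub).trans (card_image_le.trans ?_)
  rw [card_product, card_univ, Fintype.card_perm, Fintype.card_subtype_compl, Fintype.card_coe]

theorem card_filter_card_ptsOfMinimalPeriod_eq_mul_le {j a : ℕ} (hj : 0 < j) :
    #{σ : Perm α | #(σ.ptsOfMinimalPeriod j) = j * a} * (j ^ a * a !) ≤
      (Fintype.card α)! := by
  set N := Fintype.card α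
  have hcover : ({σ : Perm α | #(σ.ptsOfMinimalPeriod j) = j * a} : Finset (Perm α)) ⊆
      (powersetCard (j * a) univ).biUnion fun S => {σ : Perm α | σ.ptsOfMinimalPeriod j = S} := by
    intro σ hσ
    rw [mem_filter] at hσ
    exact mem_biUnion.2 ⟨_, mem_powersetCard.2 ⟨subset_univ _, hσ.2⟩, by simp⟩
  have hfiber : ∀ S ∈ powersetCard (j * a) univ,
      #{σ : Perm α | σ.ptsOfMinimalPeriod j = S} * (j ^ a * a !) ≤ (j * a)! * (N - j * a)! := by
    intro S hS
    have hSa : #S = j * a := (mem_powersetCard.1 hS).2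
    calc _ ≤ #{π : Perm S | ∀ x, minimalPeriod π x = j} * (N - #S)! * (j ^ a * a !) :=
          Nat.mul_le_mul_right _ (card_filter_ptsOfMinimalPeriod_eq_le j S)
      _ = #{π : Perm S | ∀ x, minimalPeriod π x = j} * (j ^ a * a !) * (N - j * a)! := by
          rw [hSa, mul_right_comm]
      _ ≤ (j * a)! * (N - j * a)! :=
          Nat.mul_le_mul_right _ (card_filter_forall_minimalPeriod_eq_mul_le hj
            (by rw [Fintype.card_coe, hSa]))
  calc _ ≤ (∑ S ∈ powersetCard (j * a) univ,
          #{σ : Perm α | σ.ptsOfMinimalPeriod j = S}) * (j ^ a * a !) :=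
        Nat.mul_le_mul_right _ ((card_le_card hcover).trans card_biUnion_le)
    _ ≤ ∑ _S ∈ powersetCard (j * a) univ, (j * a)! * (N - j * a)! := by
        rw [sum_mul]
        exact sum_le_sum hfiber
    _ = N.choose (j * a) * (j * a)! * (N - j * a)! := by
        rw [sum_const, card_powersetCard, card_univ, smul_eq_mul, mul_assoc]
    _ ≤ N ! := by
        rcases le_or_gt (j * a) N with h | h
        · exact (Nat.choose_mul_factorial_mul_factorial h).le
        · simp [Nat.choose_eq_zero_of_lt h]

end Equiv.Perm

theorem prob_cycle_count_le_general (n j a : ℕ) (hj : j ∈ Finset.Icc 1 n) :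
    ((Finset.univ.filter fun σ : Equiv.Perm (Fin n) =>
        (Finset.univ.filter fun x : Fin n =>
          Function.minimalPeriod σ x = j).card = j * a).card : ℝ) /
      (Nat.factorial n : ℝ) ≤ 1 / ((j : ℝ) ^ a * (Nat.factorial a : ℝ)) := by
  have hj0 : 0 < j := (Finset.mem_Icc.1 hj).1
  have key := Equiv.Perm.card_filter_card_ptsOfMinimalPeriod_eq_mul_le (α := Fin n) (a := a) hj0
  rw [Fintype.card_fin] at key
  rw [div_le_div_iff₀ (by positivity) (by positivity), one_mul]
  exact_mod_cast key

/-- Let `n` be a positive integer, `j ∈ {1,...,n}` and `a` with `j·a ≤ n`.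
The probability that a uniformly random permutation of `n` elements has
exactly `a` cycles (orbits) of length `j` is at most `1/(j^a · a!)`.
Having exactly `a` orbits of length `j` is expressed by saying that the set of
points whose orbit has size `j` (minimal period `j`) has cardinality `j * a`. -/
theorem prob_cycle_count_le (n j a : ℕ) (hj : j ∈ Finset.Icc 1 n) (hja : j * a ≤ n) :
    ((Finset.univ.filter fun σ : Equiv.Perm (Fin n) =>
        (Finset.univ.filter fun x : Fin n =>
          Function.minimalPeriod σ x = j).card = j * a).card : ℝ) /
      (Nat.factorial n : ℝ) ≤ 1 / ((j : ℝ) ^ a * (Nat.factorial a : ℝ)) :=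
  prob_cycle_count_le_general n j a hj
end

section
/- There exists an absolute constant C > 0 such that for every positive integer n and every prime power q, the probability that a uniformly random permutation σ ∈ S_n has, for some j ∈ {1,...,n}, strictly more than π_q(j) cycles of length j, is at most C/q. Here π_q(j) is the number of monic irreducible polynomials of degree j over F_q. -/
open scoped Classical

/-- `numIrred F j` is the number of monic irreducible polynomials of degree `j`
over the field `F` (denoted `π_q(j)` when `#F = q`). -/
noncomputable def numIrred (F : Type*) [Field F] (j : ℕ) : ℕ :=
  Nat.card {p : Polynomial F // p.Monic ∧ Irreducible p ∧ p.natDegree = j}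

/-!
Summed over all `σ`, the number of points lying in `j`-cycles of `σ` is at most `n!`: taking a
point `x` out of its cycle (`Equiv.Perm.decomposeOption`) turns "`x` lies in a `j`-cycle of a
permutation of `n` points" into "a point lies in a `(j - 1)`-cycle of a permutation of the other
`n - 1` points", and induction on `n` gives at most `(n - 1)!` permutations for each `x`. By
Markov's inequality, more than `π_q(j)` cycles of length `j` then have probability at most
`1 / (j π_q(j) + 1)`.

Sorting the `q ^ j` elements of `𝔽_{q^j}` by their minimal polynomials over `𝔽_q`, those of
degree `j` number at most `j π_q(j)`, and the others lie in subfields `𝔽_{q^d}` with `d ≤ j / 2`;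
hence `q ^ j ≤ 2 (j π_q(j) + 1)`. A union bound over `j` leaves `∑_{j ≥ 1} 2 q^{-j} ≤ 4 / q`.
-/

open Function Finset Equiv Polynomial
open scoped Nat

theorem Nat.mul_factorial_pred_le (n : ℕ) : n * (n - 1)! ≤ n ! := by
  rcases Nat.eq_zero_or_pos n with rfl | hn
  · simp
  · exact (Nat.mul_factorial_pred hn.ne').le

theorem Nat.sum_Icc_one_pow_add_two_le {q : ℕ} (hq : 2 ≤ q) (m : ℕ) :
    ∑ d ∈ Icc 1 m, q ^ d + 2 ≤ 2 * q ^ m := by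
  induction m with
  | zero => simp
  | succ m ih =>
    rw [sum_Icc_succ_top (by omega), pow_succ]
    nlinarith [Nat.one_le_pow m q (by omega)]

theorem Finset.card_filter_exists_le {ι β : Type*} (s : Finset ι) (t : Finset β)
    (P : ι → β → Prop) [∀ i, DecidablePred (P i)]
    [DecidablePred fun b => ∃ i ∈ s, P i b] :
    #{b ∈ t | ∃ i ∈ s, P i b} ≤ ∑ i ∈ s, #{b ∈ t | P i b} := by
  refine (card_le_card fun b hb => ?_).trans card_biUnion_le
  obtain ⟨hbt, i, hi, hPi⟩ := mem_filter.mp hb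
  exact mem_biUnion.mpr ⟨i, hi, mem_filter.mpr ⟨hbt, hPi⟩⟩

theorem sum_Icc_one_inv_pow_le_two_div {q : ℝ} (hq : 2 ≤ q) (n : ℕ) :
    ∑ j ∈ Icc 1 n, q⁻¹ ^ j ≤ 2 / q := by
  have hq0 : 0 < q := by linarith
  have hlt : q⁻¹ < 1 := inv_lt_one_of_one_lt₀ (by linarith)
  calc ∑ j ∈ Icc 1 n, q⁻¹ ^ j = ∑ j ∈ Ico 1 (n + 1), q⁻¹ ^ j := by
        rw [Ico_add_one_right_eq_Icc]
    _ ≤ q⁻¹ ^ 1 / (1 - q⁻¹) := geom_sum_Ico_le_of_lt_one (by positivity) hlt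
    _ ≤ 2 / q := by
        rw [pow_one, div_le_div_iff₀ (by linarith) hq0]
        field_simp
        linarith

theorem Function.minimalPeriod_permCongr {α β : Type*} (e : α ≃ β) (σ : Perm α) (x : α) :
    minimalPeriod (e.permCongr σ) (e x) = minimalPeriod σ x := by
  have hconj : Semiconj e σ (e.permCongr σ) := fun y => by simp [permCongr_apply]
  rw [minimalPeriod_eq_minimalPeriod_iff]
  intro k
  simp only [IsPeriodicPt, IsFixedPt, ← hconj.iterate_right k x, e.apply_eq_iff_eq]

namespace Equiv.Perm

/-- `decomposeOption.symm (some b, τ)` is `τ` with `none` inserted into the cycle of `b`, just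
before `b`. -/
theorem minimalPeriod_decomposeOption_symm_some {α : Type*} [DecidableEq α] [Finite α]
    (b : α) (τ : Perm α) :
    minimalPeriod (decomposeOption.symm (some b, τ)) none = minimalPeriod τ b + 1 := by
  set σ := decomposeOption.symm (some b, τ)
  set p := minimalPeriod τ b
  have hp : 0 < p := minimalPeriod_pos_of_mem_periodicPts (τ.injective.mem_periodicPts b)
  have hσ_some (y : α) : σ (some y) = if τ y = b then none else some (τ y) := by
    by_cases h : τ y = b <;> simp [σ, swap_apply_def, h]
  have hiter : ∀ k < p, σ^[k + 1] none = some (τ^[k] b) := by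
    intro k hk
    induction k with
    | zero => simp [σ]
    | succ k ih =>
      have hne : τ^[k + 1] b ≠ b := not_isPeriodicPt_of_pos_of_lt_minimalPeriod (by omega) hk
      rw [iterate_succ_apply', ih (by omega), hσ_some, ← iterate_succ_apply' τ, if_neg hne]
  have hclose : IsPeriodicPt σ (p + 1) none := by
    have hτp : τ (τ^[p - 1] b) = b := by
      rw [← iterate_succ_apply' τ, Nat.succ_eq_add_one, Nat.sub_add_cancel hp]
      exact iterate_minimalPeriod
    rw [IsPeriodicPt, IsFixedPt, show p + 1 = p - 1 + 1 + 1 by omega, iterate_succ_apply',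
      hiter _ (by omega), hσ_some, if_pos hτp]
  refine le_antisymm (hclose.minimalPeriod_le (by omega)) (not_lt.mp fun hlt => ?_)
  obtain ⟨m, hm⟩ := Nat.exists_eq_add_one.mpr (hclose.minimalPeriod_pos (by omega))
  have hback := iterate_minimalPeriod (f := σ) (x := none)
  rw [hm, hiter m (by omega)] at hback
  exact Option.some_ne_none _ hback

variable {α : Type*} [Fintype α] [DecidableEq α]

theorem card_filter_minimalPeriod_none_eq_one_le :
    #{σ : Perm (Option α) | minimalPeriod σ none = 1} ≤ (Fintype.card α)! := by
  calc #{σ : Perm (Option α) | minimalPeriod σ none = 1}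
      ≤ #(univ.image fun τ : Perm α => decomposeOption.symm (none, τ)) := by
        refine card_le_card fun σ hσ => mem_image.mpr ⟨removeNone σ, mem_univ _, ?_⟩
        have hfix : σ none = none := minimalPeriod_eq_one_iff_isFixedPt.mp (mem_filter.mp hσ).2
        simpa [hfix] using decomposeOption.symm_apply_apply σ
    _ ≤ (Fintype.card α)! := card_image_le.trans (by simp [Fintype.card_perm])

theorem card_filter_minimalPeriod_none_eq_add_two_le (k : ℕ) :
    #{σ : Perm (Option α) | minimalPeriod σ none = k + 2} ≤
      ∑ b : α, #{τ : Perm α | minimalPeriod τ b = k + 1} := by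
  calc #{σ : Perm (Option α) | minimalPeriod σ none = k + 2}
      ≤ #(univ.biUnion fun b => (univ.filter fun τ : Perm α => minimalPeriod τ b = k + 1).image
          fun τ => decomposeOption.symm (some b, τ)) := by
        refine card_le_card fun σ hσ => ?_
        obtain ⟨⟨a, τ⟩, rfl⟩ := decomposeOption.symm.surjective σ
        have hper := (mem_filter.mp hσ).2
        cases a with
        | none =>
          have hfix : IsFixedPt (decomposeOption.symm (none, τ)) none := by simp [IsFixedPt]
          rw [minimalPeriod_eq_one_iff_isFixedPt.mpr hfix] at hper
          omega
        | some b =>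
          rw [minimalPeriod_decomposeOption_symm_some] at hper
          exact mem_biUnion.mpr
            ⟨b, mem_univ _, mem_image.mpr ⟨τ, mem_filter.mpr ⟨mem_univ _, by omega⟩, rfl⟩⟩
    _ ≤ ∑ b : α, #{τ : Perm α | minimalPeriod τ b = k + 1} :=
        card_biUnion_le.trans (sum_le_sum fun _ _ => card_image_le)

theorem card_filter_minimalPeriod_eq_le (x : α) (j : ℕ) :
    #{σ : Perm α | minimalPeriod σ x = j} ≤ (Fintype.card α - 1)! := by
  induction hn : Fintype.card α using Nat.strong_induction_on generalizing α x j with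
  | _ n ih =>
    let e := optionSubtypeNe x
    have hcard : Fintype.card {y // y ≠ x} = n - 1 := by
      rw [← hn, ← Fintype.card_congr e, Fintype.card_option, Nat.add_sub_cancel]
    have htransport : #{σ : Perm α | minimalPeriod σ x = j} =
        #{σ : Perm (Option {y // y ≠ x}) | minimalPeriod σ none = j} :=
      (card_equiv e.permCongr fun σ => by
        simp only [mem_filter, mem_univ, true_and, ← minimalPeriod_permCongr e σ none]
        rfl).symm
    have hpos : 0 < n := hn ▸ Fintype.card_pos_iff.mpr ⟨x⟩
    rw [htransport, ← hcard]
    match j with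
    | 0 =>
      refine (card_eq_zero.mpr (filter_eq_empty_iff.mpr fun σ _ => ?_)).trans_le (Nat.zero_le _)
      exact (minimalPeriod_pos_of_mem_periodicPts (σ.injective.mem_periodicPts none)).ne'
    | 1 => exact card_filter_minimalPeriod_none_eq_one_le
    | k + 2 =>
      calc _ ≤ ∑ b : {y // y ≠ x}, #{τ : Perm {y // y ≠ x} | minimalPeriod τ b = k + 1} :=
            card_filter_minimalPeriod_none_eq_add_two_le k
        _ ≤ ∑ _b : {y // y ≠ x}, (Fintype.card {y // y ≠ x} - 1)! :=
            sum_le_sum fun b _ => ih (Fintype.card {y // y ≠ x}) (by omega) b (k + 1) rfl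
        _ ≤ (Fintype.card {y // y ≠ x})! := by
            rw [sum_const, card_univ, smul_eq_mul]
            exact Nat.mul_factorial_pred_le _

theorem sum_card_filter_minimalPeriod_eq_le (j : ℕ) :
    ∑ σ : Perm α, #{x | minimalPeriod σ x = j} ≤ (Fintype.card α)! := by
  calc ∑ σ : Perm α, #{x | minimalPeriod σ x = j}
      = ∑ x : α, #{σ : Perm α | minimalPeriod σ x = j} := by
        simp only [card_filter]; exact sum_comm
    _ ≤ ∑ _x : α, (Fintype.card α - 1)! :=
        sum_le_sum fun x _ => card_filter_minimalPeriod_eq_le x j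
    _ ≤ (Fintype.card α)! := by
        rw [sum_const, card_univ, smul_eq_mul]
        exact Nat.mul_factorial_pred_le _

theorem card_filter_lt_card_filter_minimalPeriod_eq_mul_le (m j : ℕ) :
    #{σ : Perm α | m < #{x | minimalPeriod σ x = j}} * (m + 1) ≤ (Fintype.card α)! := by
  calc #{σ : Perm α | m < #{x | minimalPeriod σ x = j}} * (m + 1)
      ≤ ∑ σ ∈ {σ : Perm α | m < #{x | minimalPeriod σ x = j}},
          #{x | minimalPeriod σ x = j} := by
        rw [← smul_eq_mul]
        exact card_nsmul_le_sum _ _ _ fun σ hσ => (mem_filter.mp hσ).2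
    _ ≤ ∑ σ : Perm α, #{x | minimalPeriod σ x = j} :=
        sum_le_sum_of_subset (filter_subset _ _)
    _ ≤ (Fintype.card α)! := sum_card_filter_minimalPeriod_eq_le j

end Equiv.Perm

section FiniteField

variable {F : Type*} [Field F]

theorem finite_setOf_monic_irreducible_natDegree_eq [Finite F] (j : ℕ) :
    {p : F[X] | p.Monic ∧ Irreducible p ∧ p.natDegree = j}.Finite := by
  have := Module.finite_of_finite F (M := degreeLT F (j + 1))
  refine (Set.toFinite (degreeLT F (j + 1) : Set F[X])).subset fun p hp => ?_
  rw [SetLike.mem_coe, mem_degreeLT]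
  exact degree_le_natDegree.trans_lt (by rw [hp.2.2]; exact_mod_cast j.lt_succ_self)

theorem card_filter_natDegree_minpoly_eq_le [Finite F] {E : Type*} [Field E] [Fintype E]
    [Algebra F E] (j : ℕ) : #{x : E | (minpoly F x).natDegree = j} ≤ j * numIrred F j := by
  set s : Finset E := {x | (minpoly F x).natDegree = j}
  have hfiber : ∀ P ∈ s.image (minpoly F), #{x ∈ s | minpoly F x = P} ≤ j := by
    intro P hP
    obtain ⟨x₀, hx₀, rfl⟩ := mem_image.mp hP
    calc #{x ∈ s | minpoly F x = minpoly F x₀}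
        ≤ #((minpoly F x₀).aroots E).toFinset := by
          refine card_le_card fun x hx => ?_
          rw [Multiset.mem_toFinset, mem_aroots, ← (mem_filter.mp hx).2]
          exact ⟨minpoly.ne_zero (.of_finite F x), minpoly.aeval F x⟩
      _ ≤ j := (Multiset.toFinset_card_le _).trans <|
          (card_roots_map_le_natDegree _).trans (mem_filter.mp hx₀).2.le
  have himage : #(s.image (minpoly F)) ≤ numIrred F j := by
    rw [numIrred, ← Set.ncard_coe_finset]
    refine Set.ncard_le_ncard (fun P hP => ?_)
      (finite_setOf_monic_irreducible_natDegree_eq j)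
    obtain ⟨x, hx, rfl⟩ := mem_image.mp hP
    exact ⟨minpoly.monic (.of_finite F x), minpoly.irreducible (.of_finite F x),
      (mem_filter.mp hx).2⟩
  exact (card_le_mul_card_image s j hfiber).trans (Nat.mul_le_mul_left j himage)

theorem card_filter_natDegree_minpoly_ne_le [Fintype F] {E : Type*} [Field E] [Fintype E]
    [Algebra F E] {j : ℕ} (hj : Module.finrank F E = j) :
    #{x : E | (minpoly F x).natDegree ≠ j} ≤ ∑ d ∈ Icc 1 (j / 2), Fintype.card F ^ d := by
  set q := Fintype.card F
  have hq : 1 < q := Fintype.one_lt_card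
  have hj0 : 0 < j := hj ▸ Module.finrank_pos
  calc #{x : E | (minpoly F x).natDegree ≠ j}
      ≤ #((Icc 1 (j / 2)).biUnion fun d => ((X ^ q ^ d - X : F[X]).aroots E).toFinset) := by
        refine card_le_card fun x hx => mem_biUnion.mpr ?_
        have hint : IsIntegral F x := .of_finite F x
        set d := (minpoly F x).natDegree
        have hdvd : d ∣ j := hj ▸ minpoly.degree_dvd hint
        have hd : 0 < d := minpoly.natDegree_pos hint
        have hdj : d ≤ j / 2 := by
          obtain ⟨c, hc⟩ := hdvd
          have : c ≠ 1 := fun h => (mem_filter.mp hx).2 (by rw [hc, h, mul_one])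
          have : c ≠ 0 := by rintro rfl; omega
          rw [Nat.le_div_iff_mul_le two_pos, hc]
          exact Nat.mul_le_mul_left d (by omega)
        have hroot : minpoly F x ∣ X ^ q ^ d - X := by
          have := (minpoly.irreducible hint).natDegree_dvd_iff_dvd_X_pow_card_pow_sub_X.mp dvd_rfl
          rwa [Nat.card_eq_fintype_card] at this
        refine ⟨d, mem_Icc.mpr ⟨hd, hdj⟩,
          Multiset.mem_toFinset.mpr (mem_aroots.mpr ⟨?_, ?_⟩)⟩
        · exact FiniteField.X_pow_card_pow_sub_X_ne_zero F hd.ne' hq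
        · exact aeval_eq_zero_of_dvd_aeval_eq_zero hroot (minpoly.aeval F x)
    _ ≤ ∑ d ∈ Icc 1 (j / 2), q ^ d := by
        refine card_biUnion_le.trans (sum_le_sum fun d hd => ?_)
        exact (Multiset.toFinset_card_le _).trans <| (card_roots_map_le_natDegree _).trans_eq <|
          FiniteField.X_pow_card_pow_sub_X_natDegree_eq F
            (Nat.one_le_iff_ne_zero.mp (mem_Icc.mp hd).1) hq

theorem pow_card_le_two_mul_numIrred_add_one [Fintype F] (j : ℕ) :
    Fintype.card F ^ j ≤ 2 * (j * numIrred F j + 1) := by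
  rcases Nat.eq_zero_or_pos j with rfl | hj
  · simp
  set q := Fintype.card F
  have hq : 2 ≤ q := Fintype.one_lt_card
  obtain ⟨p, hchar⟩ := CharP.exists F
  have : Fact p.Prime := ⟨CharP.char_is_prime F p⟩
  have : NeZero j := ⟨hj.ne'⟩
  let E := FiniteField.Extension F p j
  have : Fintype E := Fintype.ofFinite E
  have hcardE : Fintype.card E = q ^ j := by
    rw [Fintype.card_eq_nat_card, FiniteField.natCard_extension, Nat.card_eq_fintype_card]
  have hsplit := card_filter_add_card_filter_not (s := (univ : Finset E))
    fun x => (minpoly F x).natDegree = j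
  rw [card_univ, hcardE] at hsplit
  have hhigh := card_filter_natDegree_minpoly_eq_le (F := F) (E := E) j
  have hlow := card_filter_natDegree_minpoly_ne_le (FiniteField.finrank_extension F p j)
  have hgeom := Nat.sum_Icc_one_pow_add_two_le hq (j / 2)
  -- with `t = q ^ (j / 2)`: `q ^ j ≤ j π_q(j) + 2 t - 2`, `t ^ 2 ≤ q ^ j`, `t ^ 2 - 4 t + 6 > 0`
  have hsq : q ^ (j / 2) * q ^ (j / 2) ≤ q ^ j := by
    rw [← pow_add]; exact Nat.pow_le_pow_right (by omega) (by omega)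
  nlinarith

end FiniteField

theorem card_filter_mul_numIrred_lt_mul_pow_le (F : Type*) [Field F] [Fintype F] {α : Type*}
    [Fintype α] [DecidableEq α] (j : ℕ) :
    #{σ : Perm α | j * numIrred F j < #{x | minimalPeriod σ x = j}} * Fintype.card F ^ j ≤
      2 * (Fintype.card α)! := by
  calc _ ≤ #{σ : Perm α | j * numIrred F j < #{x | minimalPeriod σ x = j}} *
        (2 * (j * numIrred F j + 1)) :=
        Nat.mul_le_mul_left _ (pow_card_le_two_mul_numIrred_add_one j)
    _ = 2 * (#{σ : Perm α | j * numIrred F j < #{x | minimalPeriod σ x = j}} *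
        (j * numIrred F j + 1)) := by ring
    _ ≤ 2 * (Fintype.card α)! :=
        Nat.mul_le_mul_left 2 (Perm.card_filter_lt_card_filter_minimalPeriod_eq_mul_le _ j)

-- More than `π_q(j)` cycles of length `j` is stated as more than `j π_q(j)` points of period `j`.
/-- There is an absolute constant `C > 0` such that for every `n ≥ 1` and every
finite field `F` with `q` elements, the probability that a uniformly random
permutation of `n` elements has, for some `j ∈ {1,...,n}`, strictly more than
`π_q(j)` cycles of length `j`, is at most `C/q`.  Having more than `π_q(j)`
orbits of length `j` is expressed by saying that the set of points whose orbit
has size `j` (minimal period `j`) has cardinality greater than `j * π_q(j)`. -/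
theorem prob_many_cycles_le : ∃ C : ℝ, 0 < C ∧
    ∀ (n : ℕ), 0 < n → ∀ (F : Type) [Field F] [Fintype F],
    ((Finset.univ.filter fun σ : Equiv.Perm (Fin n) =>
        ∃ j ∈ Finset.Icc 1 n,
          j * numIrred F j < (Finset.univ.filter fun x : Fin n =>
            Function.minimalPeriod σ x = j).card).card : ℝ) /
      (Nat.factorial n : ℝ) ≤ C / (Fintype.card F : ℝ) := by
  refine ⟨4, by norm_num, fun n _ F _ _ => ?_⟩
  have hq : (2 : ℝ) ≤ Fintype.card F := by exact_mod_cast Fintype.one_lt_card (α := F)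
  have hbad (j : ℕ) : (#{σ : Perm (Fin n) | j * numIrred F j <
      #{x | minimalPeriod σ x = j}} : ℝ) ≤ 2 * n ! * (Fintype.card F : ℝ)⁻¹ ^ j := by
    rw [inv_pow, ← div_eq_mul_inv, le_div_iff₀ (by positivity)]
    exact_mod_cast Fintype.card_fin n ▸ card_filter_mul_numIrred_lt_mul_pow_le F j
  calc _ ≤ (∑ j ∈ Icc 1 n, #{σ : Perm (Fin n) | j * numIrred F j <
        #{x | minimalPeriod σ x = j}} : ℝ) / n ! := by
        gcongr
        norm_cast
        convert card_filter_exists_le (Icc 1 n) univ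
          fun j (σ : Equiv.Perm (Fin n)) => j * numIrred F j < #{x | minimalPeriod σ x = j}
    _ ≤ (∑ j ∈ Icc 1 n, 2 * n ! * (Fintype.card F : ℝ)⁻¹ ^ j) / n ! := by
        gcongr with j; exact hbad j
    _ = 2 * ∑ j ∈ Icc 1 n, (Fintype.card F : ℝ)⁻¹ ^ j := by
        rw [← mul_sum]; field_simp
    _ ≤ 2 * (2 / Fintype.card F) := by gcongr; exact sum_Icc_one_inv_pow_le_two_div hq n
    _ = 4 / Fintype.card F := by ring
end

section
/- There exists an absolute constant C > 0 such that for every prime power q, ∑_{j ≥ 1} 1/(π_q(j) + 1)! ≤ C/q, where π_q(j) is the number of monic irreducible polynomials of degree j over F_q. -/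
/-!
Every element of the degree-`n` extension of `𝔽_q` either has a minimal polynomial of degree
`n`, hence is one of the at most `n · π_q(n)` roots of monic irreducibles of degree `n`, or lies
in the subfield `𝔽_{q^d}` for a proper divisor `d` of `n`. So
`q^n ≤ n π_q(n) + ∑_{d ∣ n, d < n} q^d ≤ n π_q(n) + q^n / 2`, i.e. `π_q(n) ≥ q^n / (2n)`.
Then `1 / (π_q(n) + 1)! ≤ 2n q^{-n}`, and `∑_{n ≥ 1} 2n q^{-n} = 2q⁻¹ / (1 - q⁻¹)² ≤ 8 / q`.
-/

open Polynomial Finset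

theorem Polynomial.finite_setOf_natDegree_le {R : Type*} [Semiring R] [Finite R] (n : ℕ) :
    {p : R[X] | p.natDegree ≤ n}.Finite := by
  refine (Set.toFinite _).of_finite_image (f := fun p (i : Fin (n + 1)) ↦ p.coeff i)
    fun p hp q hq hpq ↦ ext fun i ↦ ?_
  by_cases hi : i ≤ n
  · exact congrFun hpq ⟨i, Nat.lt_succ_of_le hi⟩
  · have hp : p.natDegree < i := lt_of_le_of_lt hp (not_le.1 hi)
    have hq : q.natDegree < i := lt_of_le_of_lt hq (not_le.1 hi)
    rw [coeff_eq_zero_of_natDegree_lt hp, coeff_eq_zero_of_natDegree_lt hq]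

section Counting

variable {F E : Type*} [Field F] [Field E] [Algebra F E] [Finite E]

theorem ncard_setOf_natDegree_minpoly_eq_le [Finite F] (j : ℕ) :
    {x : E | (minpoly F x).natDegree = j}.ncard ≤ j * numIrred F j := by
  let Irr := {p : F[X] // p.Monic ∧ Irreducible p ∧ p.natDegree = j}
  have : Finite Irr := ((finite_setOf_natDegree_le j).subset fun p hp ↦ hp.2.2.le).to_subtype
  have := Fintype.ofFinite Irr
  have hsub : {x : E | (minpoly F x).natDegree = j} ⊆ ⋃ p : Irr, p.1.rootSet E := by
    intro x hx
    have hint := IsIntegral.of_finite F x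
    exact Set.mem_iUnion.2 ⟨⟨minpoly F x, minpoly.monic hint, minpoly.irreducible hint, hx⟩,
      mem_rootSet.2 ⟨minpoly.ne_zero hint, minpoly.aeval F x⟩⟩
  calc {x : E | (minpoly F x).natDegree = j}.ncard
      ≤ (⋃ p : Irr, p.1.rootSet E).ncard := Set.ncard_le_ncard hsub (Set.toFinite _)
    _ ≤ ∑ p : Irr, (p.1.rootSet E).ncard := Set.ncard_iUnion_le_of_fintype _
    _ ≤ ∑ _p : Irr, j := sum_le_sum fun p _ ↦ (ncard_rootSet_le _ _).trans_eq p.2.2.2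
    _ = j * numIrred F j := by simp [numIrred, Nat.card_eq_fintype_card, mul_comm, Irr]

theorem aeval_X_pow_card_pow_natDegree_minpoly_sub_X [Finite F] (x : E) :
    aeval x (X ^ Nat.card F ^ (minpoly F x).natDegree - X : F[X]) = 0 := by
  have hirr := minpoly.irreducible (IsIntegral.of_finite F x)
  exact aeval_eq_zero_of_dvd_aeval_eq_zero
    (hirr.natDegree_dvd_iff_dvd_X_pow_card_pow_sub_X.1 dvd_rfl) (minpoly.aeval F x)

theorem ncard_setOf_natDegree_minpoly_ne_le [Finite F] :
    {x : E | (minpoly F x).natDegree ≠ Module.finrank F E}.ncard ≤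
      ∑ d ∈ (Module.finrank F E).properDivisors, Nat.card F ^ d := by
  set n := Module.finrank F E
  have hq : 1 < Nat.card F := Finite.one_lt_card
  let S d := (X ^ Nat.card F ^ d - X : F[X]).rootSet E
  have hsub : {x : E | (minpoly F x).natDegree ≠ n} ⊆ ⋃ d ∈ n.properDivisors, S d := by
    intro x hx
    have hint := IsIntegral.of_finite F x
    have hdvd : (minpoly F x).natDegree ∣ n := minpoly.degree_dvd hint
    have hlt := lt_of_le_of_ne (Nat.le_of_dvd Module.finrank_pos hdvd) hx
    refine Set.mem_biUnion (Nat.mem_properDivisors.2 ⟨hdvd, hlt⟩) (mem_rootSet.2 ⟨?_, ?_⟩)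
    · exact FiniteField.X_pow_card_pow_sub_X_ne_zero F (minpoly.natDegree_pos hint).ne' hq
    · exact aeval_X_pow_card_pow_natDegree_minpoly_sub_X x
  calc {x : E | (minpoly F x).natDegree ≠ n}.ncard
      ≤ (⋃ d ∈ n.properDivisors, S d).ncard := Set.ncard_le_ncard hsub (Set.toFinite _)
    _ ≤ ∑ d ∈ n.properDivisors, (S d).ncard := n.properDivisors.set_ncard_biUnion_le S
    _ ≤ ∑ d ∈ n.properDivisors, Nat.card F ^ d := sum_le_sum fun d hd ↦
        (ncard_rootSet_le _ _).trans_eq <| FiniteField.X_pow_card_pow_sub_X_natDegree_eq F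
          (Nat.pos_of_mem_properDivisors hd).ne' hq

theorem card_pow_finrank_le [Finite F] :
    Nat.card F ^ Module.finrank F E ≤ Module.finrank F E * numIrred F (Module.finrank F E) +
      ∑ d ∈ (Module.finrank F E).properDivisors, Nat.card F ^ d := by
  rw [← Module.natCard_eq_pow_finrank,
    ← Set.ncard_add_ncard_compl {x : E | (minpoly F x).natDegree = Module.finrank F E},
    Set.compl_ofPred]
  exact add_le_add (ncard_setOf_natDegree_minpoly_eq_le _) ncard_setOf_natDegree_minpoly_ne_le

end Counting

theorem two_mul_sum_Icc_pow_le {q : ℕ} (hq : 2 ≤ q) (m : ℕ) :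
    2 * ∑ d ∈ Icc 1 m, q ^ d ≤ q ^ (2 * m) := by
  induction m with
  | zero => simp
  | succ m ih =>
    rw [sum_Icc_succ_top (by omega)]
    rcases Nat.eq_zero_or_pos m with rfl | hm
    · simp only [Icc_eq_empty_of_lt one_pos, sum_empty]
      rw [zero_add, pow_one, pow_two]
      exact Nat.mul_le_mul_right q hq
    have h1 : q ^ (m + 1) ≤ q ^ (2 * m) := Nat.pow_le_pow_right (by omega) (by omega)
    have h2 : 4 ≤ q ^ 2 := by nlinarith
    calc 2 * (∑ d ∈ Icc 1 m, q ^ d + q ^ (m + 1)) ≤ q ^ (2 * m) * 4 := by omega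
      _ ≤ q ^ (2 * m) * q ^ 2 := Nat.mul_le_mul_left _ h2
      _ = q ^ (2 * (m + 1)) := by ring

theorem two_mul_sum_pow_properDivisors_le {q : ℕ} (hq : 2 ≤ q) (n : ℕ) :
    2 * ∑ d ∈ n.properDivisors, q ^ d ≤ q ^ n := by
  have hsub : n.properDivisors ⊆ Icc 1 (n / 2) := fun d hd ↦ by
    have := Nat.one_lt_div_of_mem_properDivisors hd
    refine mem_Icc.2 ⟨Nat.pos_of_mem_properDivisors hd, (Nat.le_div_iff_mul_le two_pos).2 ?_⟩
    calc d * 2 ≤ d * (n / d) := Nat.mul_le_mul_left d this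
      _ ≤ n := Nat.mul_div_le n d
  calc 2 * ∑ d ∈ n.properDivisors, q ^ d ≤ 2 * ∑ d ∈ Icc 1 (n / 2), q ^ d := by
        exact Nat.mul_le_mul_left 2 <| sum_le_sum_of_subset hsub
    _ ≤ q ^ (2 * (n / 2)) := two_mul_sum_Icc_pow_le hq _
    _ ≤ q ^ n := Nat.pow_le_pow_right (by omega) (Nat.mul_div_le n 2)

theorem card_pow_le_two_mul_numIrred (F : Type*) [Field F] [Finite F] {n : ℕ} (hn : 0 < n) :
    Nat.card F ^ n ≤ 2 * n * numIrred F n := by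
  have := Fact.mk (CharP.char_is_prime F (ringChar F))
  have := NeZero.of_pos hn
  have h := card_pow_finrank_le (F := F) (E := FiniteField.Extension F (ringChar F) n)
  rw [FiniteField.finrank_extension] at h
  have := two_mul_sum_pow_properDivisors_le (Finite.one_lt_card : 2 ≤ Nat.card F) n
  rw [mul_assoc]
  omega

theorem one_div_factorial_numIrred_succ_le (F : Type*) [Field F] [Finite F] {n : ℕ}
    (hn : 0 < n) :
    (1 : ℝ) / (numIrred F n + 1).factorial ≤ 2 * (n * (Nat.card F : ℝ)⁻¹ ^ n) := by
  have hq : (0 : ℝ) < Nat.card F := by exact_mod_cast Nat.card_pos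
  have hfac : Nat.card F ^ n ≤ 2 * n * (numIrred F n + 1).factorial :=
    (card_pow_le_two_mul_numIrred F hn).trans
      (Nat.mul_le_mul_left _ ((Nat.le_succ _).trans (Nat.self_le_factorial _)))
  rw [inv_pow, ← div_eq_mul_inv, ← mul_div_assoc,
    div_le_div_iff₀ (by positivity) (by positivity)]
  exact_mod_cast (one_mul (Nat.card F ^ n)).trans_le (hfac.trans_eq (by ring))

theorem hasSum_succ_mul_pow_succ {𝕜 : Type*} [NormedDivisionRing 𝕜] {r : 𝕜} (hr : ‖r‖ < 1) :
    HasSum (fun n : ℕ ↦ ((n + 1 : ℕ) : 𝕜) * r ^ (n + 1)) (r / (1 - r) ^ 2) := by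
  have h := (hasSum_nat_add_iff' (f := fun n : ℕ ↦ (n : 𝕜) * r ^ n) 1).2
    (hasSum_coe_mul_geometric_of_norm_lt_one hr)
  simpa only [sum_range_one, Nat.cast_zero, zero_mul, sub_zero] using h

theorem div_one_sub_sq_le {r : ℝ} (hr0 : 0 ≤ r) (hr : r ≤ 1 / 2) : r / (1 - r) ^ 2 ≤ 4 * r := by
  have h : 1 / 4 ≤ (1 - r) ^ 2 := by nlinarith
  rw [div_le_iff₀ (by positivity)]
  nlinarith [mul_le_mul_of_nonneg_left h hr0]

/-- There is an absolute constant `C > 0` such that for every finite field `F`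
with `q` elements, `∑_{j ≥ 1} 1/(π_q(j) + 1)! ≤ C/q`. -/
theorem sum_inv_factorial_numIrred_le : ∃ C : ℝ, 0 < C ∧
    ∀ (F : Type) [Field F] [Fintype F],
    ∑' j : ℕ, (1 : ℝ) / (Nat.factorial (numIrred F (j + 1) + 1) : ℝ) ≤
      C / (Fintype.card F : ℝ) := by
  refine ⟨8, by norm_num, fun F _ _ ↦ ?_⟩
  set r : ℝ := (Nat.card F : ℝ)⁻¹
  have hr0 : 0 ≤ r := by positivity
  have hr : r ≤ 1 / 2 := by
    rw [one_div]; exact inv_anti₀ two_pos (by exact_mod_cast Finite.one_lt_card)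
  have hbound (n : ℕ) := one_div_factorial_numIrred_succ_le F n.succ_pos
  have hsum := (hasSum_succ_mul_pow_succ (r := r)
    (by rw [Real.norm_of_nonneg hr0]; linarith)).mul_left 2
  have hsummable := hsum.summable.of_nonneg_of_le (fun _ ↦ by positivity) hbound
  calc ∑' n : ℕ, (1 : ℝ) / (numIrred F (n + 1) + 1).factorial
      ≤ 2 * (r / (1 - r) ^ 2) := hsum.tsum_eq ▸ hsummable.tsum_le_tsum hbound hsum.summable
    _ ≤ 2 * (4 * r) := by gcongr; exact div_one_sub_sq_le hr0 hr
    _ = 8 / Fintype.card F := by rw [Fintype.card_eq_nat_card]; ring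
end
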